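/- Let n ≥ 1, t0 ∈ ℝ, y0 ∈ ℝ^n, and let a, b, L > 0. Suppose f : [t0, t0+a] × {y ∈ ℝ^n : ‖y − y0‖ ≤ b} → ℝ^n is continuous and satisfies ‖f(t,y)‖ ≤ L for all (t,y) in its domain, where ‖·‖ is the maximum norm on ℝ^n. Set c = min{a, b/L}. Then there exists a differentiable function φ : [t0, t0+c] → ℝ^n with φ(t0) = y0, ‖φ(t) − y0‖ ≤ b for all t ∈ [t0, t0+c], and φ'(t) = f(t, φ(t)) for all t ∈ [t0, t0+c] (one-sided derivatives at the endpoints). -/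

import Mathlib

/-!
Approximate `f` uniformly on the compact cylinder `[t0, t0 + a] × closedBall y0 b` by globally
Lipschitz fields `g m` obeying the same bound `L` (Pasch–Hausdorff envelopes, truncated
coordinatewise). Picard–Lindelöf solves `y' = g m (t, y)` on `[t0, t0 + c]`; these solutions are
`L`-Lipschitz and stay in the ball, so by Arzelà–Ascoli a subsequence converges uniformly to some
`ψ`. Dominated convergence in `φ m t = y0 + ∫ g m (s, φ m s)` shows that `ψ` solves the integral
equation of `f`, hence the initial value problem.
-/

open Set Metric Filter Topology Function
open scoped NNReal BoundedContinuousFunction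

variable {X : Type*} [PseudoMetricSpace X]

section LipschitzEnvelope

/-- The Pasch–Hausdorff envelope: for `F` bounded below on `K`, the largest `m`-Lipschitz
function that lies below `F` on `K`. -/
noncomputable def lipschitzEnvelope (K : Set X) (F : X → ℝ) (m : ℝ≥0) (x : X) : ℝ :=
  ⨅ q : K, (F q + m * dist x q)

variable {K : Set X} {F : X → ℝ} {α : ℝ}

lemma bddBelow_range_add_mul_dist (hα : ∀ q ∈ K, α ≤ F q) (m : ℝ≥0) (x : X) :
    BddBelow (range fun q : K => F q + m * dist x q) :=
  ⟨α, by rintro _ ⟨q, rfl⟩; exact le_add_of_le_of_nonneg (hα q q.2) (by positivity)⟩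

lemma le_lipschitzEnvelope (hK : K.Nonempty) (hα : ∀ q ∈ K, α ≤ F q) (m : ℝ≥0) (x : X) :
    α ≤ lipschitzEnvelope K F m x :=
  have := hK.to_subtype
  le_ciInf fun q => le_add_of_le_of_nonneg (hα q q.2) (by positivity)

lemma lipschitzEnvelope_le (hα : ∀ q ∈ K, α ≤ F q) (m : ℝ≥0) (x : X) {q : X} (hq : q ∈ K) :
    lipschitzEnvelope K F m x ≤ F q + m * dist x q :=
  ciInf_le (bddBelow_range_add_mul_dist hα m x) ⟨q, hq⟩

lemma lipschitzEnvelope_le_self (hα : ∀ q ∈ K, α ≤ F q) (m : ℝ≥0) {x : X} (hx : x ∈ K) :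
    lipschitzEnvelope K F m x ≤ F x := by
  simpa using lipschitzEnvelope_le hα m x hx

lemma lipschitzWith_lipschitzEnvelope (hK : K.Nonempty) (hα : ∀ q ∈ K, α ≤ F q) (m : ℝ≥0) :
    LipschitzWith m (lipschitzEnvelope K F m) := by
  have := hK.to_subtype
  refine LipschitzWith.of_le_add_mul m fun x y => ?_
  rw [← sub_le_iff_le_add]
  refine le_ciInf fun q => sub_le_iff_le_add.2 ?_
  calc lipschitzEnvelope K F m x ≤ F q + m * dist x q := lipschitzEnvelope_le hα m x q.2
    _ ≤ F q + m * (dist y q + dist x y) := by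
      gcongr
      exact (dist_triangle x y q).trans_eq (add_comm _ _)
    _ = F q + m * dist y q + m * dist x y := by ring

lemma tendstoUniformlyOn_lipschitzEnvelope (hK : IsCompact K) (hF : ContinuousOn F K) :
    TendstoUniformlyOn (fun m : ℕ => lipschitzEnvelope K F m) F atTop K := by
  obtain ⟨C, hC⟩ := hK.exists_bound_of_continuousOn hF
  have hα : ∀ q ∈ K, -C ≤ F q := fun q hq => neg_le_of_abs_le (hC q hq)
  rw [Metric.tendstoUniformlyOn_iff]
  intro ε hε
  obtain ⟨δ, hδ, hFδ⟩ := Metric.uniformContinuousOn_iff.1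
    (hK.uniformContinuousOn_of_continuous hF) (ε / 2) (half_pos hε)
  filter_upwards [eventually_ge_atTop ⌈2 * C / δ⌉₊] with m hm x hx
  have hmδ : 2 * C ≤ m * δ := (div_le_iff₀ hδ).1 (Nat.ceil_le.1 hm)
  -- Points `q` within `δ` of `x` are handled by uniform continuity; farther ones are
  -- penalised by `m * dist x q ≥ 2 * C`, which exceeds the oscillation of `F`.
  have hlow : F x - ε / 2 ≤ lipschitzEnvelope K F m x := by
    have : Nonempty K := ⟨⟨x, hx⟩⟩
    refine le_ciInf fun q => ?_
    push_cast
    have hFq := abs_le.1 (hC q q.2)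
    have hFx := abs_le.1 (hC x hx)
    rcases lt_or_ge (dist x q) δ with hxq | hxq
    · have := abs_lt.1 (hFδ x hx q q.2 hxq)
      linarith [mul_nonneg m.cast_nonneg (dist_nonneg (x := x) (y := q))]
    · linarith [mul_le_mul_of_nonneg_left hxq m.cast_nonneg (α := ℝ)]
  rw [Real.dist_eq, abs_lt]
  constructor <;> linarith [lipschitzEnvelope_le_self hα m hx]

end LipschitzEnvelope

theorem exists_lipschitzWith_tendstoUniformlyOn_pi {ι : Type*} [Fintype ι] {K : Set X}
    (hK : IsCompact K) (hK₀ : K.Nonempty) {F : X → ι → ℝ} (hF : ContinuousOn F K) {L : ℝ}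
    (hFL : ∀ x ∈ K, ‖F x‖ ≤ L) :
    ∃ g : ℕ → X → ι → ℝ, (∀ m : ℕ, LipschitzWith m (g m)) ∧ (∀ m x, ‖g m x‖ ≤ L) ∧
      TendstoUniformlyOn g F atTop K := by
  obtain ⟨x₀, hx₀⟩ := hK₀
  have hL : 0 ≤ L := (norm_nonneg _).trans (hFL x₀ hx₀)
  have hFj : ∀ j, ∀ x ∈ K, -L ≤ F x j ∧ F x j ≤ L := fun j x hx =>
    abs_le.1 ((norm_le_pi_norm (F x) j).trans (hFL x hx))
  have hlow : ∀ j, ∀ x ∈ K, -L ≤ F x j := fun j x hx => (hFj j x hx).1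
  -- Truncating at `L` keeps the bound off `K`, where the envelopes may exceed `L`.
  refine ⟨fun m x j => min L (lipschitzEnvelope K (F · j) m x), fun m => ?_, fun m x => ?_, ?_⟩
  · refine LipschitzWith.of_dist_le_mul fun x y => (dist_pi_le_iff (by positivity)).2 fun j => ?_
    exact ((lipschitzWith_lipschitzEnvelope ⟨x₀, hx₀⟩ (hlow j) m).const_min L).dist_le_mul x y
  · refine (pi_norm_le_iff_of_nonneg hL).2 fun j => abs_le.2 ⟨?_, min_le_left _ _⟩
    exact le_min (by linarith) (le_lipschitzEnvelope ⟨x₀, hx₀⟩ (hlow j) m x)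
  · rw [Metric.tendstoUniformlyOn_iff]
    intro ε hε
    have hconv := fun j => Metric.tendstoUniformlyOn_iff.1
      (tendstoUniformlyOn_lipschitzEnvelope hK ((continuous_apply j).comp_continuousOn hF)) ε hε
    filter_upwards [eventually_all.2 hconv] with m hm x hx
    refine (dist_pi_lt_iff hε).2 fun j => ?_
    rw [min_eq_right ((lipschitzEnvelope_le_self (hlow j) m hx).trans (hFj j x hx).2)]
    exact hm j x hx

theorem exists_strictMono_tendstoUniformlyOn_of_lipschitzOnWith {E : Type*} [MetricSpace E]
    {s : Set X} (hs : IsCompact s) {T : Set E} (hT : IsCompact T) {C : ℝ≥0} {u : ℕ → X → E}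
    (hu : ∀ m, LipschitzOnWith C (u m) s) (huT : ∀ m, MapsTo (u m) s T) :
    ∃ ψ : X → E, ∃ σ : ℕ → ℕ, StrictMono σ ∧ TendstoUniformlyOn (fun i => u (σ i)) ψ atTop s := by
  have := isCompact_iff_compactSpace.1 hs
  let Φ : ℕ → s →ᵇ E := fun m => .mkOfCompact ⟨s.domRestrict (u m), (hu m).to_restrict.continuous⟩
  have hequi : Equicontinuous ((↑) : range Φ → s → E) := by
    refine (LipschitzWith.uniformEquicontinuous _ C fun f => ?_).equicontinuous
    obtain ⟨m, hm⟩ := f.2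
    rw [← hm]
    exact (hu m).to_restrict
  have hA := BoundedContinuousFunction.arzela_ascoli T hT (range Φ)
    (by rintro _ x ⟨m, rfl⟩; exact huT m x.2) hequi
  obtain ⟨ψ, -, σ, hσ, hlim⟩ := hA.isSeqCompact fun m => subset_closure (mem_range_self m)
  refine ⟨extend Subtype.val ψ (u 0), σ, hσ, ?_⟩
  rw [tendstoUniformlyOn_iff_tendstoUniformly_comp_coe, extend_comp Subtype.val_injective]
  exact BoundedContinuousFunction.tendsto_iff_tendstoUniformly.1 hlim

variable {E : Type*} [NormedAddCommGroup E] [NormedSpace ℝ E]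

theorem exists_lipschitzOnWith_eq_picard [CompleteSpace E] {g : ℝ × E → E} {C L : ℝ≥0}
    (hg : LipschitzWith C g) (hgL : ∀ p, ‖g p‖ ≤ L) {t0 T : ℝ} (hT : t0 ≤ T) (y0 : E) :
    ∃ φ : ℝ → E, LipschitzOnWith L φ (Icc t0 T) ∧
      ∀ t ∈ Icc t0 T, φ t = ODE.picard (curry g) t0 y0 φ t := by
  have hPL : IsPicardLindelof (curry g) (⟨t0, left_mem_Icc.2 hT⟩ : Icc t0 T) y0
      ⟨L * (T - t0), mul_nonneg L.2 (sub_nonneg.2 hT)⟩ 0 L C :=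
    { lipschitzOnWith := fun t _ =>
        ((hg.comp (LipschitzWith.prodMk_left t)).weaken (mul_one C).le).lipschitzOnWith
      continuousOn := fun y _ =>
        (hg.continuous.comp (continuous_id.prodMk continuous_const)).continuousOn
      norm_le := fun t _ y _ => hgL (t, y)
      mul_max_le := by simp [sub_nonneg.2 hT]; exact le_rfl }
  obtain ⟨φ, hφ0, hφ⟩ := hPL.exists_eq_forall_mem_Icc_hasDerivWithinAt₀
  refine ⟨φ, (convex_Icc t0 T).lipschitzOnWith_of_nnnorm_hasDerivWithin_le hφ
    fun t _ => hgL _, fun t ht => ?_⟩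
  have hsub : uIcc t0 t ⊆ Icc t0 T := uIcc_subset_Icc (left_mem_Icc.2 hT) ht
  rw [← hφ0]
  exact (ODE.picard_eq_of_hasDerivAt (u := univ) (by simpa using hg.continuous.continuousOn)
    (fun t' ht' => (hφ t' (hsub ht')).mono hsub) (mapsTo_univ _ _)).symm

theorem eq_add_integral_of_tendsto {φ G : ℕ → ℝ → E} {ψ F : ℝ → E} {t0 T L : ℝ} {y0 : E}
    (hφ : ∀ m, ∀ t ∈ Icc t0 T, φ m t = y0 + ∫ s in t0..t, G m s)
    (hGc : ∀ m, ContinuousOn (G m) (Icc t0 T)) (hGL : ∀ m, ∀ s ∈ Icc t0 T, ‖G m s‖ ≤ L)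
    (hG : ∀ s ∈ Icc t0 T, Tendsto (fun m => G m s) atTop (𝓝 (F s)))
    (hφψ : ∀ t ∈ Icc t0 T, Tendsto (fun m => φ m t) atTop (𝓝 (ψ t))) :
    ∀ t ∈ Icc t0 T, ψ t = y0 + ∫ s in t0..t, F s := by
  intro t ht
  have hsub : uIoc t0 t ⊆ Icc t0 T :=
    uIoc_subset_uIcc.trans (uIcc_subset_Icc (left_mem_Icc.2 (ht.1.trans ht.2)) ht)
  have hint : Tendsto (fun m => ∫ s in t0..t, G m s) atTop (𝓝 (∫ s in t0..t, F s)) :=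
    intervalIntegral.tendsto_integral_filter_of_dominated_convergence (fun _ => L)
      (.of_forall fun m => ((hGc m).mono hsub).aestronglyMeasurable measurableSet_uIoc)
      (.of_forall fun m => .of_forall fun s hs => hGL m s (hsub hs)) intervalIntegrable_const
      (.of_forall fun s hs => hG s (hsub hs))
  refine tendsto_nhds_unique (hφψ t ht) ?_
  exact (hint.const_add y0).congr fun m => (hφ m t ht).symm

theorem exists_hasDerivWithinAt_of_tendstoUniformlyOn [ProperSpace E]
    {f : ℝ → E → E} {g : ℕ → ℝ × E → E} {t0 T b : ℝ} {y0 : E} {L : ℝ≥0}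
    (hT : t0 ≤ T) (hLT : L * (T - t0) ≤ b)
    (hf : ContinuousOn (uncurry f) (Icc t0 T ×ˢ closedBall y0 b))
    (hg_lip : ∀ m, ∃ C, LipschitzWith C (g m)) (hgL : ∀ m p, ‖g m p‖ ≤ L)
    (hg : TendstoUniformlyOn g (uncurry f) atTop (Icc t0 T ×ˢ closedBall y0 b)) :
    ∃ φ : ℝ → E, φ t0 = y0 ∧ MapsTo φ (Icc t0 T) (closedBall y0 b) ∧
      ∀ t ∈ Icc t0 T, HasDerivWithinAt φ (f t (φ t)) (Icc t0 T) t := by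
  have ht0 : t0 ∈ Icc t0 T := left_mem_Icc.2 hT
  choose C hC using hg_lip
  choose φ hφlip hφ using fun m => exists_lipschitzOnWith_eq_picard (hC m) (hgL m) hT y0
  have hφball : ∀ m, MapsTo (φ m) (Icc t0 T) (closedBall y0 b) := fun m t ht => by
    have h := (hφlip m).dist_le_mul t ht t0 ht0
    rw [hφ m t0 ht0, ODE.picard_apply₀, Real.dist_eq, abs_of_nonneg (sub_nonneg.2 ht.1)] at h
    exact h.trans (le_trans (by gcongr; exact ht.2) hLT)
  obtain ⟨ψ, σ, hσ, hψ⟩ := exists_strictMono_tendstoUniformlyOn_of_lipschitzOnWith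
    isCompact_Icc (isCompact_closedBall y0 b) hφlip hφball
  have hlim : ∀ t ∈ Icc t0 T, Tendsto (fun i => φ (σ i) t) atTop (𝓝 (ψ t)) :=
    fun t ht => hψ.tendsto_at ht
  have hψball : MapsTo ψ (Icc t0 T) (closedBall y0 b) := fun t ht =>
    isClosed_closedBall.mem_of_tendsto (hlim t ht) (.of_forall fun i => hφball _ ht)
  have hψc : ContinuousOn ψ (Icc t0 T) :=
    hψ.continuousOn (.of_forall fun i => (hφlip _).continuousOn)
  have hgσ : TendstoUniformlyOn (fun i => g (σ i)) (uncurry f) atTop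
      (Icc t0 T ×ˢ closedBall y0 b) := fun u hu => hσ.tendsto_atTop.eventually (hg u hu)
  have hψeq : ∀ t ∈ Icc t0 T, ψ t = ODE.picard f t0 y0 ψ t := by
    refine eq_add_integral_of_tendsto (fun i => hφ (σ i)) (fun i => ?_) (fun i s _ => hgL _ _)
      (fun s hs => ?_) hlim
    · exact ODE.continuousOn_comp (by simpa using (hC _).continuous.continuousOn)
        (hφlip _).continuousOn (mapsTo_univ _ _)
    · refine hgσ.tendsto_comp (hf (s, ψ s) ⟨hs, hψball hs⟩) (tendsto_nhdsWithin_iff.2 ⟨?_, ?_⟩)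
      · exact tendsto_const_nhds.prodMk_nhds (hlim s hs)
      · exact .of_forall fun i => ⟨hs, hφball _ hs⟩
  refine ⟨ψ, by rw [hψeq t0 ht0, ODE.picard_apply₀], hψball, fun t ht => ?_⟩
  exact (ODE.hasDerivWithinAt_picard_Icc ht0 hf hψc hψball y0 ht).congr_of_mem hψeq ht

theorem peano_local (n : ℕ) (t0 : ℝ) (y0 : Fin n → ℝ)
    (a b L : ℝ) (ha : 0 < a) (hb : 0 < b) (hL : 0 < L)
    (f : ℝ → (Fin n → ℝ) → (Fin n → ℝ))
    (hf : ContinuousOn (fun p : ℝ × (Fin n → ℝ) => f p.1 p.2)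
      (Icc t0 (t0 + a) ×ˢ Metric.closedBall y0 b))
    (hfL : ∀ t ∈ Icc t0 (t0 + a), ∀ y ∈ Metric.closedBall y0 b, ‖f t y‖ ≤ L) :
    ∃ φ : ℝ → Fin n → ℝ,
      φ t0 = y0 ∧
      (∀ t ∈ Icc t0 (t0 + min a (b / L)), ‖φ t - y0‖ ≤ b) ∧
      (∀ t ∈ Icc t0 (t0 + min a (b / L)),
        HasDerivWithinAt φ (f t (φ t)) (Icc t0 (t0 + min a (b / L))) t) := by
  have hc : 0 ≤ min a (b / L) := (lt_min ha (div_pos hb hL)).le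
  have hLc : L * (t0 + min a (b / L) - t0) ≤ b := by
    rw [add_sub_cancel_left]
    exact (le_div_iff₀' hL).1 (min_le_right _ _)
  have hK : IsCompact (Icc t0 (t0 + a) ×ˢ closedBall y0 b) :=
    isCompact_Icc.prod (isCompact_closedBall y0 b)
  have hK₀ : (Icc t0 (t0 + a) ×ˢ closedBall y0 b).Nonempty :=
    ⟨(t0, y0), left_mem_Icc.2 (by linarith), mem_closedBall_self hb.le⟩
  obtain ⟨g, hg_lip, hgL, hg⟩ := exists_lipschitzWith_tendstoUniformlyOn_pi hK hK₀ hf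
    fun p hp => hfL p.1 hp.1 p.2 hp.2
  have hsub : Icc t0 (t0 + min a (b / L)) ×ˢ closedBall y0 b ⊆
      Icc t0 (t0 + a) ×ˢ closedBall y0 b :=
    prod_mono (Icc_subset_Icc_right (by linarith [min_le_left a (b / L)])) subset_rfl
  obtain ⟨φ, hφ0, hφball, hφ⟩ := exists_hasDerivWithinAt_of_tendstoUniformlyOn (L := ⟨L, hL.le⟩)
    (by linarith) hLc (hf.mono hsub) (fun m => ⟨m, hg_lip m⟩) hgL (hg.mono hsub)
  exact ⟨φ, hφ0, fun t ht => mem_closedBall_iff_norm.1 (hφball ht), hφ⟩
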